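/- arXiv:2505.09281 — 9 statements merged into one kernel-verified Lean document; each statement's English description precedes it below -/
import Mathlib

section
/- A finite abelian group G is a cut group (i.e. every element is inverse semi-rational) if and only if the exponent of G divides 4 or 6. -/
/-- A finite group is a *cut group* (inverse semi-rational) if for every element `x`
and every integer `j` coprime to the order of `x`, `x ^ j` is conjugate to `x` or to `x⁻¹`. -/
def IsCutGroup (G : Type*) [Group G] : Prop :=
  ∀ x : G, ∀ j : ℤ, Int.gcd j (orderOf x) = 1 →
    IsConj (x ^ j) x ∨ IsConj (x ^ j) x⁻¹

/-!
In an abelian group, `x ^ j ∈ {x, x⁻¹}` says `j ≡ ±1` modulo `n = orderOf x`, so `G` is a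
cut group iff for every element order `n`, every unit of `ℤ/n` is `±1`; this holds when
`n ∣ 4` or `n ∣ 6`. Conversely, if `5 ∣ n` then a power `y` of `x` has order `5` and
`y ^ 2 ∉ {y, y⁻¹}`, while if `5 ∤ n` the condition for `j = 5` gives `n ∣ 4` or `n ∣ 6`.
The exponent of a finite abelian group is the order of one of its elements.
-/

theorem ZMod.eq_one_or_eq_neg_one_of_isUnit {n : ℕ} (hn : n ∣ 4 ∨ n ∣ 6) {u : ZMod n}
    (hu : IsUnit u) : u = 1 ∨ u = -1 := by
  have hn' : n ∈ ({1, 2, 4} : Finset ℕ) ∨ n ∈ ({1, 2, 3, 6} : Finset ℕ) := by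
    rcases hn with hn | hn
    · exact .inl <| show Nat.divisors 4 = {1, 2, 4} by decide ▸
        Nat.mem_divisors.2 ⟨hn, by norm_num⟩
    · exact .inr <| show Nat.divisors 6 = {1, 2, 3, 6} by decide ▸
        Nat.mem_divisors.2 ⟨hn, by norm_num⟩
  simp only [Finset.mem_insert, Finset.mem_singleton] at hn'
  revert u
  rcases hn' with (rfl | rfl | rfl) | (rfl | rfl | rfl | rfl) <;> decide

theorem Int.dvd_sub_one_or_dvd_add_one_of_isCoprime {n : ℕ} (hn : n ∣ 4 ∨ n ∣ 6) {j : ℤ}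
    (hj : IsCoprime j n) : (n : ℤ) ∣ j - 1 ∨ (n : ℤ) ∣ j + 1 := by
  have hunit : IsUnit (j : ZMod n) := by
    simpa only [eq_intCast, Int.cast_natCast, ZMod.natCast_self, isCoprime_zero_right]
      using hj.map (Int.castRingHom (ZMod n))
  rw [← ZMod.intCast_zmod_eq_zero_iff_dvd, ← ZMod.intCast_zmod_eq_zero_iff_dvd, Int.cast_sub,
    Int.cast_add, Int.cast_one, sub_eq_zero, add_eq_zero_iff_eq_neg]
  exact ZMod.eq_one_or_eq_neg_one_of_isUnit hn hunit

theorem zpow_eq_self_iff_dvd {G : Type*} [Group G] {x : G} {j : ℤ} :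
    x ^ j = x ↔ (orderOf x : ℤ) ∣ j - 1 := by
  rw [orderOf_dvd_sub_iff_zpow_eq_zpow, zpow_one]

theorem zpow_eq_inv_iff_dvd {G : Type*} [Group G] {x : G} {j : ℤ} :
    x ^ j = x⁻¹ ↔ (orderOf x : ℤ) ∣ j + 1 := by
  rw [← sub_neg_eq_add, orderOf_dvd_sub_iff_zpow_eq_zpow, zpow_neg_one]

section CommGroup

variable {G : Type*} [CommGroup G]

theorem isCutGroup_iff_dvd : IsCutGroup G ↔ ∀ x : G, ∀ j : ℤ, IsCoprime j (orderOf x) →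
    (orderOf x : ℤ) ∣ j - 1 ∨ (orderOf x : ℤ) ∣ j + 1 := by
  simp only [IsCutGroup, isConj_iff_eq, zpow_eq_self_iff_dvd, zpow_eq_inv_iff_dvd,
    Int.isCoprime_iff_gcd_eq_one]

theorem IsCutGroup.orderOf_ne_five (h : IsCutGroup G) (x : G) : orderOf x ≠ 5 := by
  intro hx
  have := isCutGroup_iff_dvd.mp h x 2 (by rw [hx]; norm_num [Int.isCoprime_iff_gcd_eq_one])
  rw [hx] at this
  norm_num at this

theorem IsCutGroup.not_five_dvd_orderOf (h : IsCutGroup G) {x : G} (hx : IsOfFinOrder x) :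
    ¬ 5 ∣ orderOf x := fun h5 ↦
  h.orderOf_ne_five _ (orderOf_pow_orderOf_div hx.orderOf_pos.ne' h5)

theorem IsCutGroup.orderOf_dvd_four_or_dvd_six (h : IsCutGroup G) {x : G} (hx : IsOfFinOrder x) :
    orderOf x ∣ 4 ∨ orderOf x ∣ 6 := by
  have hcop : IsCoprime ((5 : ℕ) : ℤ) (orderOf x) := by
    rw [Nat.isCoprime_iff_coprime, Nat.Prime.coprime_iff_not_dvd (by norm_num)]
    exact h.not_five_dvd_orderOf hx
  simpa [← Int.natCast_dvd_natCast] using isCutGroup_iff_dvd.mp h x 5 hcop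

theorem isCutGroup_of_exponent_dvd (h : Monoid.exponent G ∣ 4 ∨ Monoid.exponent G ∣ 6) :
    IsCutGroup G :=
  isCutGroup_iff_dvd.mpr fun x _ hj ↦ Int.dvd_sub_one_or_dvd_add_one_of_isCoprime
    (h.imp (Monoid.order_dvd_exponent x).trans (Monoid.order_dvd_exponent x).trans) hj

end CommGroup

theorem stmt_1 {G : Type*} [CommGroup G] [Finite G] :
    IsCutGroup G ↔ (Monoid.exponent G ∣ 4 ∨ Monoid.exponent G ∣ 6) := by
  refine ⟨fun h ↦ ?_, isCutGroup_of_exponent_dvd⟩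
  obtain ⟨g, hg⟩ := Monoid.exists_orderOf_eq_exponent (Monoid.ExponentExists.of_finite (G := G))
  rw [← hg]
  exact h.orderOf_dvd_four_or_dvd_six (isOfFinOrder_of_finite g)
end

section
/- If G is a finite cut group and N is a normal subgroup of G, then the quotient group G/N is also a cut group. -/
theorem stmt_2 {G : Type*} [Group G] [Finite G] (N : Subgroup G) [N.Normal]
    (hG : IsCutGroup G) : IsCutGroup (G ⧸ N) := by
  intro y j hj
  obtain ⟨x, rfl⟩ := QuotientGroup.mk'_surjective N y
  set π := QuotientGroup.mk' N with hπ
  set n := orderOf (π x) with hn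
  set m := orderOf x with hm
  have hnm : n ∣ m := orderOf_map_dvd π x
  have hm0 : 0 < m := orderOf_pos x
  have hn0 : 0 < n := orderOf_pos (π x)
  haveI : NeZero m := ⟨hm0.ne'⟩
  haveI : NeZero n := ⟨hn0.ne'⟩
  -- replace j by a natural number a ≡ j [mod n] coprime to n
  set a : ℕ := (j % (n : ℤ)).toNat with ha
  have hn0' : (n : ℤ) ≠ 0 := by exact_mod_cast hn0.ne'
  have hja : (a : ℤ) = j % (n : ℤ) := Int.toNat_of_nonneg (Int.emod_nonneg j hn0')
  have hamod : j ≡ (a : ℤ) [ZMOD (n : ℤ)] := by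
    rw [Int.ModEq, hja, Int.emod_emod_of_dvd _ dvd_rfl]
  have hcop : IsCoprime (j : ℤ) (n : ℤ) := Int.isCoprime_iff_gcd_eq_one.mpr hj
  have hcopa : IsCoprime ((a : ℤ)) ((n : ℤ)) := by
    rw [hja, Int.emod_def, sub_eq_add_neg, neg_mul_eq_mul_neg]
    exact hcop.add_mul_left_left _
  have hcopan : Nat.Coprime a n := by
    have := Int.isCoprime_iff_gcd_eq_one.mp hcopa
    rwa [Int.gcd_natCast_natCast] at this
  -- lift the unit a of ZMod n to a unit of ZMod m
  obtain ⟨v, hv⟩ := ZMod.unitsMap_surjective (n := n) hnm (ZMod.unitOfCoprime a hcopan)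
  set b : ℕ := (v : ZMod m).val with hb
  have hbm : Nat.Coprime b m := ZMod.val_coe_unit_coprime v
  have hbmod : b ≡ a [MOD n] := by
    have : ((v : ZMod m).cast : ZMod n) = ((a : ZMod n)) := by
      have := congrArg (fun u : (ZMod n)ˣ => (u : ZMod n)) hv
      simpa [ZMod.unitsMap_def, ZMod.unitOfCoprime] using this
    have hbv : ((b : ZMod n)) = ((a : ZMod n)) := by
      rw [hb, ZMod.natCast_val]
      exact this
    exact (ZMod.natCast_eq_natCast_iff _ _ _).mp hbv
  -- use the cut property in G for exponent b
  have hgcd : Int.gcd (b : ℤ) m = 1 := by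
    rw [Int.gcd_natCast_natCast]; exact hbm
  have key := hG x (b : ℤ) hgcd
  have heq : (π x) ^ j = (π x) ^ (b : ℤ) := by
    rw [zpow_eq_zpow_iff_modEq]
    exact hamod.trans (Int.natCast_modEq_iff.mpr hbmod.symm)
  rw [heq]
  rcases key with h | h
  · exact Or.inl (by simpa using π.map_isConj h)
  · right
    have := π.map_isConj h
    simpa using this
end

section
/- If G is a finite cut group, then its center Z(G) is a cut group; equivalently, the exponent of Z(G) divides 4 or 6. -/
theorem dvd_four_or_dvd_six_of_forall_isCoprime {n : ℕ} (hn : 0 < n)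
    (h : ∀ j : ℤ, IsCoprime j n → (n : ℤ) ∣ j - 1 ∨ (n : ℤ) ∣ j + 1) : n ∣ 4 ∨ n ∣ 6 := by
  have bound : ∀ j : ℤ, 1 < j → IsCoprime j n → (n : ℤ) ≤ j + 1 := by
    intro j hj hcop
    rcases h j hcop with hd | hd
    · exact (Int.le_of_dvd (by omega) hd).trans (by omega)
    · exact Int.le_of_dvd (by omega) hd
  suffices n ≤ 6 ∧ n ≠ 5 by
    obtain ⟨hle, hne⟩ := this
    interval_cases n <;> omega
  -- the coprimality of each test exponent is witnessed by an explicit Bézout identity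
  rcases Nat.even_or_odd' n with ⟨k, rfl | rfl⟩
  · rcases Nat.even_or_odd' k with ⟨m, rfl | rfl⟩
    · have := bound (2 * m + 1) (by omega) ⟨1 - 2 * m, m, by push_cast; ring⟩
      omega
    · have := bound (2 * m + 3) (by omega)
        ⟨2 * m ^ 2 + 2 * m + 1, -(m + 1) ^ 2, by push_cast; ring⟩
      omega
  · have := bound 2 (by omega) ⟨-k, 1, by push_cast; ring⟩
    omega

namespace IsCutGroup

variable {G : Type*} [Group G]

theorem zpow_eq_self_or_eq_inv_of_mem_center (hG : IsCutGroup G) {x : G}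
    (hx : x ∈ Subgroup.center G) {j : ℤ} (hj : Int.gcd j (orderOf x) = 1) :
    x ^ j = x ∨ x ^ j = x⁻¹ :=
  (hG x j hj).imp (·.eq_of_right_mem_center hx) (·.eq_of_right_mem_center (inv_mem hx))

theorem center (hG : IsCutGroup G) : IsCutGroup (Subgroup.center G) := by
  intro x j hj
  rw [← Subgroup.orderOf_coe] at hj
  rcases hG.zpow_eq_self_or_eq_inv_of_mem_center x.2 hj with h | h
  · left
    rw [show x ^ j = x from Subtype.ext (by simpa using h)]
  · right
    rw [show x ^ j = x⁻¹ from Subtype.ext (by simpa using h)]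

theorem orderOf_dvd_four_or_dvd_six_of_mem_center (hG : IsCutGroup G) {x : G}
    (hx : x ∈ Subgroup.center G) (hfin : IsOfFinOrder x) :
    orderOf x ∣ 4 ∨ orderOf x ∣ 6 := by
  refine dvd_four_or_dvd_six_of_forall_isCoprime hfin.orderOf_pos fun j hj => ?_
  rw [orderOf_dvd_iff_zpow_eq_one, orderOf_dvd_iff_zpow_eq_one, zpow_sub_one, zpow_add_one]
  rcases hG.zpow_eq_self_or_eq_inv_of_mem_center hx (Int.isCoprime_iff_gcd_eq_one.mp hj)
    with h | h <;> simp [h]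

theorem exponent_center_dvd_four_or_dvd_six [Finite G] (hG : IsCutGroup G) :
    Monoid.exponent (Subgroup.center G) ∣ 4 ∨ Monoid.exponent (Subgroup.center G) ∣ 6 := by
  obtain ⟨g, hg⟩ := open scoped IsMulCommutative in
    Monoid.exists_orderOf_eq_exponent (G := Subgroup.center G) .of_finite
  rw [← hg, ← Subgroup.orderOf_coe]
  exact hG.orderOf_dvd_four_or_dvd_six_of_mem_center g.2 (isOfFinOrder_of_finite _)

end IsCutGroup

theorem stmt_3 {G : Type*} [Group G] [Finite G] (hG : IsCutGroup G) :
    IsCutGroup (Subgroup.center G) ∧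
      (Monoid.exponent (Subgroup.center G) ∣ 4 ∨ Monoid.exponent (Subgroup.center G) ∣ 6) :=
  ⟨hG.center, hG.exponent_center_dvd_four_or_dvd_six⟩
end

section
/- Let G be a finite cut group with an abelian Sylow p-subgroup P for p ∈ {2,3}. Then P has exponent dividing 4 or 6; in particular P is a cut group. -/
open Subgroup

theorem isPGroup_zpowers_of_pow_eq_one {G : Type*} [Group G] {p n : ℕ} {x : G}
    (hx : x ^ p ^ n = 1) : IsPGroup p (zpowers x) :=
  IsPGroup.of_card_dvd_pow (by rw [Nat.card_zpowers]; exact orderOf_dvd_of_pow_eq_one hx)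

theorem conj_pow_eq_zpow_pow {G : Type*} [Group G] {c y : G} {k : ℤ}
    (h : c * y * c⁻¹ = y ^ k) (n : ℕ) : c ^ n * y * (c ^ n)⁻¹ = y ^ k ^ n := by
  induction n with
  | zero => simp
  | succ n ih =>
    calc c ^ (n + 1) * y * (c ^ (n + 1))⁻¹ = c * (c ^ n * y * (c ^ n)⁻¹) * c⁻¹ := by group
      _ = y ^ k ^ (n + 1) := by rw [ih, ← conj_zpow, h, ← zpow_mul, ← pow_succ']

theorem mem_normalizer_zpowers_of_conj_eq_zpow {G : Type*} [Group G] [Finite G] {c y : G}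
    {k : ℤ} (h : c * y * c⁻¹ = y ^ k) : c ∈ normalizer (zpowers y : Set G) := by
  refine mem_normalizer_fintype fun _ ⟨i, hi⟩ ↦ ⟨k * i, ?_⟩
  subst hi
  dsimp only
  rw [← conj_zpow, h, zpow_mul]

namespace Sylow

variable {G : Type*} [Group G] [Finite G] {p : ℕ} [Fact p.Prime]

theorem isMulCommutative (P : Sylow p G) [IsMulCommutative (P : Subgroup G)] (Q : Sylow p G) :
    IsMulCommutative (Q : Subgroup G) := by
  obtain ⟨g, rfl⟩ := MulAction.exists_smul_eq G P Q
  rw [coe_subgroup_smul, Subgroup.pointwise_smul_def]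
  exact map_isMulCommutative _ _

theorem commute_of_isPGroup (P : Sylow p G) [IsMulCommutative (P : Subgroup G)]
    {H : Subgroup G} (hH : IsPGroup p H) {a b : G} (ha : a ∈ H) (hb : b ∈ H) : Commute a b := by
  obtain ⟨Q, hHQ⟩ := hH.exists_le_sylow
  have := P.isMulCommutative Q
  exact setLike_mul_comm (hHQ ha) (hHQ hb)

theorem commute_of_mem_normalizer_zpowers (P : Sylow p G) [IsMulCommutative (P : Subgroup G)]
    {y z : G} (hy : IsPGroup p (zpowers y)) (hz : IsPGroup p (zpowers z))
    (hzy : z ∈ normalizer (zpowers y : Set G)) : Commute z y :=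
  P.commute_of_isPGroup (hy.to_sup_of_normal_left' hz (zpowers_le.mpr hzy))
    (mem_sup_right (mem_zpowers z)) (mem_sup_left (mem_zpowers y))

theorem not_dvd_orderOf_of_conj_eq_zpow (P : Sylow p G) [IsMulCommutative (P : Subgroup G)]
    {y c : G} {a : ℕ} {k : ℤ} (hy : y ^ p ^ a = 1) (hc : c * y * c⁻¹ = y ^ k) :
    ¬ p ∣ orderOf (k : ZMod (orderOf y)) := by
  set u := ordCompl[p] (orderOf c)
  have hu : ¬ p ∣ u := Nat.not_dvd_ordCompl Fact.out (orderOf_pos c).ne'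
  have hcu : (c ^ u) ^ p ^ (orderOf c).factorization p = 1 := by
    rw [← pow_mul, mul_comm, Nat.ordProj_mul_ordCompl_eq_self, pow_orderOf_eq_one]
  have hcomm : Commute (c ^ u) y :=
    P.commute_of_mem_normalizer_zpowers (isPGroup_zpowers_of_pow_eq_one hy)
      (isPGroup_zpowers_of_pow_eq_one hcu)
      (pow_mem (mem_normalizer_zpowers_of_conj_eq_zpow hc) u)
  have hku : y ^ k ^ u = y ^ (1 : ℤ) := by
    rw [← conj_pow_eq_zpow_pow hc, hcomm.eq, mul_inv_cancel_right, zpow_one]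
  have hku' : (k : ZMod (orderOf y)) ^ u = 1 := by
    exact_mod_cast (ZMod.intCast_eq_intCast_iff _ _ _).mpr (zpow_eq_zpow_iff_modEq.mp hku)
  exact fun hdvd ↦ hu (hdvd.trans (orderOf_dvd_of_pow_eq_one hku'))

end Sylow

namespace IsCutGroup

variable {G : Type*} [Group G]

theorem exists_conj_eq_zpow (hG : IsCutGroup G) (x : G) {j : ℤ}
    (hj : j.gcd (orderOf x) = 1) :
    ∃ c : G, c * x * c⁻¹ = x ^ j ∨ c * x * c⁻¹ = x ^ (-j) := by
  rcases hG x j hj with h | h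
  · obtain ⟨c, hc⟩ := isConj_iff.mp (isConj_comm.mp h)
    exact ⟨c, .inl hc⟩
  · obtain ⟨c, hc⟩ := isConj_iff.mp h
    refine ⟨c⁻¹, .inr ?_⟩
    calc c⁻¹ * x * c⁻¹⁻¹ = c⁻¹ * (c * x ^ j * c⁻¹)⁻¹ * c := by
          rw [hc, inv_inv, inv_inv]
      _ = x ^ (-j) := by group

theorem not_dvd_orderOf_intCast_or_neg [Finite G] (hG : IsCutGroup G) {p : ℕ} [Fact p.Prime]
    (P : Sylow p G) [IsMulCommutative (P : Subgroup G)] {y : G} {a : ℕ} (hy : y ^ p ^ a = 1)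
    {j : ℤ} (hj : j.gcd (orderOf y) = 1) :
    ¬ p ∣ orderOf (j : ZMod (orderOf y)) ∨ ¬ p ∣ orderOf (-j : ZMod (orderOf y)) := by
  obtain ⟨c, hc | hc⟩ := hG.exists_conj_eq_zpow y hj
  · exact .inl (P.not_dvd_orderOf_of_conj_eq_zpow hy hc)
  · exact .inr (by exact_mod_cast P.not_dvd_orderOf_of_conj_eq_zpow hy hc)

theorem orderOf_ne_eight [Finite G] (hG : IsCutGroup G) (P : Sylow 2 G)
    [IsMulCommutative (P : Subgroup G)] (y : G) : orderOf y ≠ 8 := by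
  intro hy
  have h := hG.not_dvd_orderOf_intCast_or_neg P (y := y) (a := 3) (j := 3)
    (orderOf_dvd_iff_pow_eq_one.mp (by rw [hy]; norm_num)) (by rw [hy]; rfl)
  rw [hy] at h
  push_cast at h
  rw [orderOf_eq_prime (p := 2) (by decide) (by decide : (3 : ZMod 8) ≠ 1),
    orderOf_eq_prime (p := 2) (by decide) (by decide : (-3 : ZMod 8) ≠ 1)] at h
  simp at h

theorem orderOf_ne_nine [Finite G] (hG : IsCutGroup G) (P : Sylow 3 G)
    [IsMulCommutative (P : Subgroup G)] (y : G) : orderOf y ≠ 9 := by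
  intro hy
  have h := hG.not_dvd_orderOf_intCast_or_neg P (y := y) (a := 2) (j := 2)
    (orderOf_dvd_iff_pow_eq_one.mp (by rw [hy]; norm_num)) (by rw [hy]; rfl)
  rw [hy] at h
  push_cast at h
  rw [(orderOf_eq_iff (by norm_num) (x := (2 : ZMod 9)) (n := 6)).2 ⟨by decide, by decide⟩,
    orderOf_eq_prime (p := 3) (by decide) (by decide : (-2 : ZMod 9) ≠ 1)] at h
  simp at h

end IsCutGroup

theorem IsPGroup.exponent_dvd_of_forall_orderOf_ne {H : Type*} [Group H] [Finite H] {p s : ℕ}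
    [Fact p.Prime] (hH : IsPGroup p H) (h : ∀ x : H, orderOf x ≠ p ^ (s + 1)) :
    Monoid.exponent H ∣ p ^ s := by
  refine Monoid.exponent_dvd_of_forall_pow_eq_one fun x ↦ orderOf_dvd_iff_pow_eq_one.mp ?_
  obtain ⟨a, ha⟩ := hH.exists_orderOf_eq_pow x
  rw [ha]
  refine pow_dvd_pow p (not_lt.mp fun has ↦ h (x ^ (orderOf x / p ^ (s + 1))) ?_)
  exact orderOf_pow_orderOf_div (orderOf_pos x).ne' (ha ▸ pow_dvd_pow p has)

theorem ZMod.eq_one_or_neg_one_of_isUnit {n : ℕ} (hn : n ∣ 4 ∨ n ∣ 6) {a : ZMod n}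
    (ha : IsUnit a) : a = 1 ∨ a = -1 := by
  obtain ⟨b, hab⟩ := isUnit_iff_exists_inv.mp ha
  have hn' : n = 1 ∨ n = 2 ∨ n = 3 ∨ n = 4 ∨ n = 6 := by
    have hn12 : n ∣ 12 := hn.elim (·.trans (by norm_num)) (·.trans (by norm_num))
    have := Nat.le_of_dvd (by norm_num) hn12
    interval_cases n <;> omega
  revert a b
  rcases hn' with rfl | rfl | rfl | rfl | rfl <;> decide

theorem IsCutGroup.of_exponent_dvd {H : Type*} [Group H]
    (h : Monoid.exponent H ∣ 4 ∨ Monoid.exponent H ∣ 6) : IsCutGroup H := by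
  intro x j hj
  have hunit : IsUnit (j : ZMod (orderOf x)) :=
    (ZMod.coe_int_isUnit_iff_isCoprime _ _).mpr
      (Int.isCoprime_iff_gcd_eq_one.mpr (by rwa [Int.gcd_comm]))
  rcases ZMod.eq_one_or_neg_one_of_isUnit (h.imp (Monoid.order_dvd_exponent x).trans
      (Monoid.order_dvd_exponent x).trans) hunit with h1 | h1
  · left
    rw [← Int.cast_one, ZMod.intCast_eq_intCast_iff, ← zpow_eq_zpow_iff_modEq, zpow_one] at h1
    rw [h1]
  · right
    rw [← Int.cast_one, ← Int.cast_neg, ZMod.intCast_eq_intCast_iff, ← zpow_eq_zpow_iff_modEq,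
      zpow_neg_one] at h1
    rw [h1]

theorem stmt_4 {G : Type*} [Group G] [Finite G] (hG : IsCutGroup G)
    (p : ℕ) [Fact p.Prime] (hp : p = 2 ∨ p = 3) (P : Sylow p G)
    (hab : ∀ a b : (P : Subgroup G), a * b = b * a) :
    (Monoid.exponent (P : Subgroup G) ∣ 4 ∨ Monoid.exponent (P : Subgroup G) ∣ 6) ∧
      IsCutGroup (P : Subgroup G) := by
  have : IsMulCommutative (P : Subgroup G) := ⟨⟨hab⟩⟩
  have hexp :
      Monoid.exponent (P : Subgroup G) ∣ 4 ∨ Monoid.exponent (P : Subgroup G) ∣ 6 := by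
    rcases hp with rfl | rfl
    · refine .inl (P.2.exponent_dvd_of_forall_orderOf_ne (s := 2) fun x ↦ ?_)
      rw [← Subgroup.orderOf_coe]
      exact hG.orderOf_ne_eight P x
    · refine .inr ((P.2.exponent_dvd_of_forall_orderOf_ne (s := 1) fun x ↦ ?_).trans
        (by norm_num))
      rw [← Subgroup.orderOf_coe]
      exact hG.orderOf_ne_nine P x
  exact ⟨hexp, IsCutGroup.of_exponent_dvd hexp⟩
end

section
/- Let G be a finite cut group with a normal Sylow p-subgroup P, where p ∈ {2,3}. Then P is a cut group: every x ∈ P and every j coprime to |x| satisfy that x^j is conjugate to x or x⁻¹ by an element of P. -/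
private lemma conj_pow_act {G : Type*} [Group G] {y x : G} {a : ℤ}
    (h : y * x * y⁻¹ = x ^ a) : ∀ s : ℕ, y ^ s * x * (y ^ s)⁻¹ = x ^ (a ^ s) := by
  intro s
  induction s with
  | zero => simp
  | succ s ih =>
      have h1 : y ^ (s + 1) * x * (y ^ (s + 1))⁻¹ = y * (y ^ s * x * (y ^ s)⁻¹) * y⁻¹ := by
        group
      rw [h1, ih, ← conj_zpow, h, ← zpow_mul]
      congr 1
      rw [pow_succ]
      ring

private lemma units_sq_cases {n : ℕ} {f : ℕ} (hn : n = 3 ^ f) (v : (ZMod n)ˣ)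
    (hv : v ^ 2 = 1) : v = 1 ∨ v = -1 := by
  subst hn
  haveI : NeZero (3 ^ f) := ⟨pow_ne_zero f (by norm_num)⟩
  set w : ℤ := ((v : ZMod (3 ^ f)).val : ℤ) with hw_def
  have hw : ((w : ℤ) : ZMod (3 ^ f)) = (v : ZMod (3 ^ f)) := by
    simp [hw_def, ZMod.natCast_val, ZMod.cast_id]
  have hdvd : ((3 : ℤ) ^ f) ∣ (w - 1) * (w + 1) := by
    have h2 : ((v : ZMod (3 ^ f))) ^ 2 = 1 := by
      have := congrArg (Units.val) hv
      simpa using this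
    have h3 : ((w ^ 2 - 1 : ℤ) : ZMod (3 ^ f)) = 0 := by
      push_cast [hw]
      rw [h2]; ring
    have h4 := (ZMod.intCast_zmod_eq_zero_iff_dvd _ _).mp h3
    have h5 : ((3 ^ f : ℕ) : ℤ) = (3 : ℤ) ^ f := by push_cast; ring
    rw [h5] at h4
    have h6 : (w - 1) * (w + 1) = w ^ 2 - 1 := by ring
    rw [h6]; exact h4
  have h3p : Prime (3 : ℤ) := Int.prime_three
  by_cases h : (3 : ℤ) ∣ w - 1
  · left
    have hnd : ¬ (3 : ℤ) ∣ w + 1 := by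
      intro hc
      have : (3 : ℤ) ∣ 2 := by
        have := dvd_sub hc h
        simpa using this
      norm_num at this
    have hco : IsCoprime ((3 : ℤ) ^ f) (w + 1) :=
      ((h3p.coprime_iff_not_dvd).mpr hnd).pow_left
    have hd1 : ((3 : ℤ) ^ f) ∣ w - 1 := hco.dvd_of_dvd_mul_right hdvd
    have : ((w - 1 : ℤ) : ZMod (3 ^ f)) = 0 := by
      rw [ZMod.intCast_zmod_eq_zero_iff_dvd]
      exact_mod_cast hd1
    push_cast [hw] at this
    have hv1 : (v : ZMod (3 ^ f)) = 1 := by linear_combination this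
    exact Units.ext (by simpa using hv1)
  · right
    have hco : IsCoprime ((3 : ℤ) ^ f) (w - 1) :=
      ((h3p.coprime_iff_not_dvd).mpr h).pow_left
    have hd1 : ((3 : ℤ) ^ f) ∣ w + 1 := by
      have hdvd' : ((3 : ℤ) ^ f) ∣ (w + 1) * (w - 1) := by
        rw [mul_comm]; exact hdvd
      exact hco.dvd_of_dvd_mul_right hdvd'
    have : ((w + 1 : ℤ) : ZMod (3 ^ f)) = 0 := by
      rw [ZMod.intCast_zmod_eq_zero_iff_dvd]
      exact_mod_cast hd1
    push_cast [hw] at this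
    have hv1 : (v : ZMod (3 ^ f)) = -1 := by linear_combination this
    refine Units.ext ?_
    rw [hv1]
    simp

theorem stmt_5 {G : Type*} [Group G] [Finite G] (hG : IsCutGroup G)
    (p : ℕ) [Fact p.Prime] (hp : p = 2 ∨ p = 3) (P : Sylow p G)
    (hnorm : (P : Subgroup G).Normal) :
    ∀ x ∈ (P : Subgroup G), ∀ j : ℤ, Int.gcd j (orderOf x) = 1 →
      ∃ g ∈ (P : Subgroup G), g * x ^ j * g⁻¹ = x ∨ g * x ^ j * g⁻¹ = x⁻¹ := by
  intro x hxP j hj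
  by_cases hx1 : x = 1
  · exact ⟨1, (P : Subgroup G).one_mem, Or.inl (by simp [hx1])⟩
  -- basic setup
  set n := orderOf x with hn
  have hppr : p.Prime := Fact.out
  have hn0 : n ≠ 0 := (orderOf_pos x).ne'
  haveI : NeZero n := ⟨hn0⟩
  obtain ⟨f, hf⟩ : ∃ f : ℕ, n = p ^ f := by
    have h := (IsPGroup.iff_orderOf.mp P.isPGroup') ⟨x, hxP⟩
    obtain ⟨k, hk⟩ := h
    refine ⟨k, ?_⟩
    rw [hn, ← hk]
    exact orderOf_injective (P : Subgroup G).subtype Subtype.coe_injective ⟨x, hxP⟩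
  have hf0 : f ≠ 0 := by
    rintro rfl
    rw [pow_zero] at hf
    exact hx1 (orderOf_eq_one_iff.mp hf)
  -- get conjugating element
  obtain ⟨ε, hε, g, hg⟩ : ∃ ε : ℤ, (ε = 1 ∨ ε = -1) ∧ ∃ g : G, g * x ^ j * g⁻¹ = x ^ ε := by
    rcases hG x j hj with h | h
    · obtain ⟨g, hg⟩ := isConj_iff.mp h
      exact ⟨1, Or.inl rfl, g, by simpa using hg⟩
    · obtain ⟨g, hg⟩ := isConj_iff.mp h
      exact ⟨-1, Or.inr rfl, g, by simpa using hg⟩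
  -- inverse of j modulo n
  obtain ⟨j', b, hbez⟩ := Int.isCoprime_iff_gcd_eq_one.mpr hj
  have hjj' : (j : ZMod n) * ((j' : ℤ) : ZMod n) = 1 := by
    have h1 : ((j' * j + b * n : ℤ) : ZMod n) = ((1 : ℤ) : ZMod n) := by rw [hbez]
    push_cast at h1
    rw [ZMod.natCast_self] at h1
    rw [mul_comm]
    linear_combination h1
  set k : ℤ := ε * j' with hk_def
  -- conjugation by g sends x to x ^ k
  have hgx : g * x * g⁻¹ = x ^ k := by
    have h1 : x = (x ^ j) ^ j' := by
      rw [← zpow_mul]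
      have : x ^ (1 : ℤ) = x ^ (j * j') := by
        rw [zpow_eq_zpow_iff_modEq]
        rw [← hn]
        have : ((1 : ℤ) : ZMod n) = ((j * j' : ℤ) : ZMod n) := by
          push_cast
          rw [hjj']
        exact (ZMod.intCast_eq_intCast_iff _ _ _).mp this
      simpa using this
    calc g * x * g⁻¹ = g * (x ^ j) ^ j' * g⁻¹ := by rw [← h1]
      _ = (g * x ^ j * g⁻¹) ^ j' := conj_zpow.symm
      _ = (x ^ ε) ^ j' := by rw [hg]
      _ = x ^ k := by rw [← zpow_mul, hk_def]
  -- the unit given by k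
  have hε2 : ((ε : ℤ) : ZMod n) * ((ε : ℤ) : ZMod n) = 1 := by
    rcases hε with rfl | rfl <;> norm_num
  have hKuval : ((k : ℤ) : ZMod n) * ((ε * j : ℤ) : ZMod n) = 1 := by
    push_cast [hk_def]
    push_cast at hε2
    calc (ε : ZMod n) * (j' : ZMod n) * ((ε : ZMod n) * (j : ZMod n))
        = ((ε : ZMod n) * (ε : ZMod n)) * ((j : ZMod n) * (j' : ZMod n)) := by ring
      _ = 1 := by rw [hε2, hjj', one_mul]
  set Ku : (ZMod n)ˣ := ⟨((k : ℤ) : ZMod n), ((ε * j : ℤ) : ZMod n), hKuval,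
    by rw [mul_comm]; exact hKuval⟩ with hKu_def
  have hjk : (j : ZMod n) * (Ku : ZMod n) = ((ε : ℤ) : ZMod n) := by
    show (j : ZMod n) * ((k : ℤ) : ZMod n) = ((ε : ℤ) : ZMod n)
    push_cast [hk_def]
    calc (j : ZMod n) * ((ε : ZMod n) * (j' : ZMod n))
        = (ε : ZMod n) * ((j : ZMod n) * (j' : ZMod n)) := by ring
      _ = (ε : ZMod n) := by rw [hjj', mul_one]
  -- order analysis of Ku
  set t := orderOf Ku with ht_def
  have ht0 : t ≠ 0 := (orderOf_pos Ku).ne'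
  set a := t.factorization p with ha_def
  set A := p ^ a with hA_def
  set u := t / A with hu_def
  have hAu : A * u = t := Nat.ordProj_mul_ordCompl_eq_self t p
  have hpu : ¬ p ∣ u := Nat.not_dvd_ordCompl hppr ht0
  have hut : u ∣ t := Nat.ordCompl_dvd t p
  -- u divides p - 1
  have hup : u ∣ p - 1 := by
    have h1 : t ∣ Fintype.card (ZMod n)ˣ := orderOf_dvd_card
    have h2 : Fintype.card (ZMod n)ˣ = p ^ (f - 1) * (p - 1) := by
      rw [ZMod.card_units_eq_totient, hf, Nat.totient_prime_pow hppr (Nat.pos_of_ne_zero hf0)]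
    have h4 : u ∣ p ^ (f - 1) * (p - 1) := h2 ▸ (hut.trans h1)
    have h5 : Nat.Coprime u (p ^ (f - 1)) :=
      (((Nat.Prime.coprime_iff_not_dvd hppr).mpr hpu).pow_left _).symm
    exact h5.dvd_of_dvd_mul_left h4
  have hu2 : u ∣ 2 := by
    rcases hp with rfl | rfl
    · exact hup.trans (by norm_num)
    · exact hup
  -- Bezout coefficients for A and u
  have hAucop : Nat.Coprime A u :=
    ((Nat.Prime.coprime_iff_not_dvd hppr).mpr hpu).pow_left a
  obtain ⟨c, d, hcd⟩ : IsCoprime (A : ℤ) (u : ℤ) := by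
    rw [Int.isCoprime_iff_gcd_eq_one]
    exact_mod_cast hAucop
  set m : ℤ := d * u with hm_def
  -- the p'-part R of Ku
  set R : (ZMod n)ˣ := Ku ^ (c * A) with hR_def
  have hRu : R ^ u = 1 := by
    rw [hR_def, ← zpow_natCast, ← zpow_mul]
    have : c * A * u = (t : ℤ) * c := by
      rw [← hAu]; push_cast; ring
    rw [this, zpow_mul, zpow_natCast, pow_orderOf_eq_one, one_zpow]
  have hR2 : R ^ 2 = 1 := by
    obtain ⟨w, hw⟩ := hu2
    rw [hw, pow_mul, hRu, one_pow]
  have hRcases : R = 1 ∨ R = -1 := by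
    rcases hp with rfl | rfl
    · left
      have hu1 : u = 1 := by
        have := hup
        simpa using this
      rw [← pow_one R, ← hu1]
      exact hRu
    · exact units_sq_cases hf R hR2
  have hRinv : R⁻¹ = R := by
    rcases hRcases with h | h <;> rw [h] <;> simp
  -- Ku ^ (m - 1) = R⁻¹
  have hKm1 : Ku ^ (m - 1) = R⁻¹ := by
    have hmm : m - 1 = -(c * (A : ℤ)) := by linarith [hcd]
    rw [hmm, zpow_neg, hR_def]
  -- W = Ku ^ m has p-power order
  set W : (ZMod n)ˣ := Ku ^ m with hW_def
  have hWA : W ^ A = 1 := by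
    rw [hW_def, ← zpow_natCast, ← zpow_mul]
    have : m * A = (t : ℤ) * d := by rw [hm_def, ← hAu]; push_cast; ring
    rw [this, zpow_mul, zpow_natCast, pow_orderOf_eq_one, one_zpow]
  -- positive exponent m' with Ku ^ m' = W
  have htpos : (0 : ℤ) < (t : ℤ) := by exact_mod_cast Nat.pos_of_ne_zero ht0
  set m' : ℕ := (m % t).toNat with hm'_def
  have hm'' : ((m' : ℕ) : ℤ) = m % t := Int.toNat_of_nonneg (Int.emod_nonneg m htpos.ne')
  have hKm : Ku ^ m' = W := by
    rw [hW_def, ← zpow_natCast, zpow_eq_zpow_iff_modEq, ← ht_def, hm'']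
    exact Int.emod_emod_of_dvd m dvd_rfl
  -- conjugation by h0 = g ^ m'
  set h0 : G := g ^ m' with hh0_def
  have hconj0 : h0 * x * h0⁻¹ = x ^ (k ^ m') := conj_pow_act hgx m'
  set d0 := orderOf h0 with hd0_def
  have hd00 : d0 ≠ 0 := (orderOf_pos h0).ne'
  set α := d0.factorization p with hα_def
  set q := d0 / p ^ α with hq_def
  have hd0 : p ^ α * q = d0 := Nat.ordProj_mul_ordCompl_eq_self d0 p
  -- cast bridge : (k ^ m' : ZMod n) = W
  have hW' : ((k ^ m' : ℤ) : ZMod n) = (W : ZMod n) := by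
    push_cast
    rw [← hKm]
    show ((Ku : ZMod n)) ^ m' = ((Ku ^ m' : (ZMod n)ˣ) : ZMod n)
    rw [Units.val_pow_eq_pow_val]
  -- order of W divides p ^ α
  have hWd0 : W ^ d0 = 1 := by
    have h1 := conj_pow_act hconj0 d0
    rw [hd0_def, pow_orderOf_eq_one, one_mul, inv_one, mul_one] at h1
    have h2 : x ^ ((k ^ m') ^ d0) = x ^ (1 : ℤ) := by rw [← h1, zpow_one]
    rw [zpow_eq_zpow_iff_modEq, ← hn] at h2
    have h3 : (((k ^ m') ^ d0 : ℤ) : ZMod n) = ((1 : ℤ) : ZMod n) :=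
      (ZMod.intCast_eq_intCast_iff _ _ _).mpr h2
    refine Units.ext ?_
    rw [Units.val_pow_eq_pow_val, ← hW']
    push_cast at h3 ⊢
    exact h3
  have hWord : ∃ b0 : ℕ, orderOf W = p ^ b0 ∧ p ^ b0 ∣ p ^ α := by
    have h1 : orderOf W ∣ A := orderOf_dvd_of_pow_eq_one hWA
    obtain ⟨b0, _, hb0⟩ := (Nat.dvd_prime_pow hppr).mp h1
    refine ⟨b0, hb0, ?_⟩
    have h2 : p ^ b0 ∣ d0 := hb0 ▸ orderOf_dvd_of_pow_eq_one hWd0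
    have h3 : b0 ≤ α := by
      rw [hα_def]
      exact (Nat.Prime.pow_dvd_iff_le_factorization hppr hd00).mp h2
    exact pow_dvd_pow p h3
  obtain ⟨b0, hb0, hb0α⟩ := hWord
  -- choose exponent e
  have hqA : Nat.Coprime q (p ^ α) :=
    (((Nat.coprime_ordCompl hppr hd00)).symm).pow_right α
  obtain ⟨e, he0, he1⟩ := Nat.chineseRemainder hqA 0 1
  have hqe : q ∣ e := (Nat.modEq_zero_iff_dvd).mp he0
  set h : G := h0 ^ e with hh_def
  -- h is in P
  have hhP : h ∈ (P : Subgroup G) := by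
    have hh1 : h ^ (p ^ α) = 1 := by
      rw [hh_def, ← pow_mul]
      apply orderOf_dvd_iff_pow_eq_one.mp
      rw [← hd0_def]
      obtain ⟨s, rfl⟩ := hqe
      rw [← hd0]
      exact ⟨s, by ring⟩
    have hpgroup : IsPGroup p (Subgroup.zpowers h) := by
      rintro ⟨y, hy⟩
      refine ⟨α, ?_⟩
      obtain ⟨s, rfl⟩ := Subgroup.mem_zpowers_iff.mp hy
      ext
      show (h ^ s) ^ (p ^ α) = 1
      rw [← zpow_natCast, ← zpow_mul, mul_comm, zpow_mul, zpow_natCast, hh1, one_zpow]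
    obtain ⟨Q, hQ⟩ := hpgroup.exists_le_sylow
    haveI : Finite (Sylow p G) :=
      Finite.of_injective (fun S : Sylow p G => (S : Subgroup G))
        (fun S T hST => Sylow.ext (by simpa using hST))
    haveI := Sylow.unique_of_normal P hnorm
    have hQP : Q = P := Subsingleton.elim Q P
    rw [← hQP]
    exact hQ (Subgroup.mem_zpowers h)
  refine ⟨h, hhP, ?_⟩
  -- the action of h
  have hhx : h * x * h⁻¹ = x ^ ((k ^ m') ^ e) := conj_pow_act hconj0 e
  have hWe : W ^ e = W := by
    conv_rhs => rw [← pow_one W]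
    rw [pow_eq_pow_iff_modEq, hb0]
    exact Nat.ModEq.of_dvd hb0α he1
  -- key congruence
  obtain ⟨δ, hδ, hval⟩ : ∃ δ : ℤ, (δ = 1 ∨ δ = -1) ∧
      (((k ^ m') ^ e * j : ℤ) : ZMod n) = ((δ : ℤ) : ZMod n) := by
    have hbase : (((k ^ m') ^ e * j : ℤ) : ZMod n) = ((ε : ℤ) : ZMod n) * (R : ZMod n) := by
      push_cast
      have h1 : ((k : ℤ) : ZMod n) ^ m' = (W : ZMod n) := by
        have := hW'; push_cast at this; exact this
      rw [h1]
      have h2 : ((W : ZMod n)) ^ e = ((W ^ e : (ZMod n)ˣ) : ZMod n) := by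
        rw [Units.val_pow_eq_pow_val]
      rw [h2, hWe]
      have h3 : W = R⁻¹ * Ku := by
        rw [hW_def, ← hKm1]
        conv_lhs => rw [show m = (m - 1) + 1 by ring]
        rw [zpow_add, zpow_one]
      rw [h3, hRinv]
      push_cast
      calc (R : ZMod n) * (Ku : ZMod n) * (j : ZMod n)
          = (R : ZMod n) * ((j : ZMod n) * (Ku : ZMod n)) := by ring
        _ = (R : ZMod n) * ((ε : ℤ) : ZMod n) := by rw [hjk]
        _ = ((ε : ℤ) : ZMod n) * (R : ZMod n) := by ring
    rcases hRcases with hR1 | hR1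
    · refine ⟨ε, hε, ?_⟩
      rw [hbase, hR1]
      simp
    · refine ⟨-ε, ?_, ?_⟩
      · rcases hε with rfl | rfl
        · right; rfl
        · left; norm_num
      · rw [hbase, hR1]
        have hneg : ((-1 : (ZMod n)ˣ) : ZMod n) = -1 := by simp
        rw [hneg]
        push_cast
        ring
  -- finish
  have hfinal : h * x ^ j * h⁻¹ = x ^ δ := by
    have h1 : h * x ^ j * h⁻¹ = (h * x * h⁻¹) ^ j := conj_zpow.symm
    rw [h1, hhx, ← zpow_mul]
    rw [zpow_eq_zpow_iff_modEq, ← hn]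
    exact (ZMod.intCast_eq_intCast_iff _ _ _).mp hval
  rcases hδ with rfl | rfl
  · left; rw [hfinal, zpow_one]
  · right; rw [hfinal]; simp
end

section
/- A finite 2-group G is a cut group if and only if every element x ∈ G satisfies x³ ∼ x or x³ ∼ x⁻¹. -/
private lemma aux_isConj_pow {G : Type*} [Group G] {a b : G} (h : IsConj a b) (n : ℕ) :
    IsConj (a ^ n) (b ^ n) := by
  obtain ⟨c, hc⟩ := isConj_iff.mp h
  exact isConj_iff.mpr ⟨c, by rw [← hc, conj_pow]⟩

private lemma aux_isConj_inv {G : Type*} [Group G] {a b : G} (h : IsConj a b) :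
    IsConj a⁻¹ b⁻¹ := by
  obtain ⟨c, hc⟩ := isConj_iff.mp h
  exact isConj_iff.mpr ⟨c, by rw [← hc]; group⟩

/-- `3 ^ (2 ^ (k+1)) = 1 + 2^(k+3) * u` with `u` odd. -/
private lemma aux_three_pow (k : ℕ) :
    ∃ u : ℤ, Odd u ∧ (3 : ℤ) ^ (2 ^ (k + 1)) = 1 + 2 ^ (k + 3) * u := by
  induction k with
  | zero => exact ⟨1, odd_one, by norm_num⟩
  | succ n ih =>
    obtain ⟨u, hu, h⟩ := ih
    refine ⟨u + 2 ^ (n + 2) * u ^ 2, ?_, ?_⟩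
    · exact hu.add_even (Even.mul_right ⟨2 ^ (n + 1), by ring⟩ _)
    · have h2 : (3 : ℤ) ^ (2 ^ (n + 2)) = ((3 : ℤ) ^ (2 ^ (n + 1))) ^ 2 := by
        rw [← pow_mul, ← pow_succ]
      rw [h2, h]
      ring

/-- Every odd integer is `± 3 ^ m` modulo `2 ^ (k + 3)`. -/
private lemma aux_pm_three_pow (k : ℕ) : ∀ j : ℤ, Odd j →
    ∃ m : ℕ, (2 ^ (k + 3) : ℤ) ∣ j - 3 ^ m ∨ (2 ^ (k + 3) : ℤ) ∣ j + 3 ^ m := by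
  induction k with
  | zero =>
    intro j hj
    obtain ⟨t, ht⟩ := hj
    have h8 : j % 8 = 1 ∨ j % 8 = 3 ∨ j % 8 = 5 ∨ j % 8 = 7 := by omega
    rcases h8 with h | h | h | h
    · exact ⟨0, Or.inl (by norm_num; omega)⟩
    · exact ⟨1, Or.inl (by norm_num; omega)⟩
    · exact ⟨1, Or.inr (by norm_num; omega)⟩
    · exact ⟨0, Or.inr (by norm_num; omega)⟩
  | succ n ih =>
    intro j hj
    obtain ⟨m, hm | hm⟩ := ih j hj
    · obtain ⟨c, hc⟩ := hm
      rcases Int.even_or_odd c with hcpar | hcpar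
      · obtain ⟨d, hd⟩ := hcpar
        exact ⟨m, Or.inl ⟨d, by rw [hc, hd]; ring⟩⟩
      · obtain ⟨u, hu, hA⟩ := aux_three_pow n
        have hpar : Even (c - 3 ^ m * u) := hcpar.sub_odd ((Int.odd_pow.mpr (Or.inl ⟨1, by norm_num⟩)).mul hu)
        obtain ⟨e, he⟩ := hpar
        refine ⟨m + 2 ^ (n + 1), Or.inl ⟨e, ?_⟩⟩
        rw [pow_add (3 : ℤ) m, hA]
        linear_combination hc + (2 : ℤ) ^ (n + 3) * he
    · obtain ⟨c, hc⟩ := hm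
      rcases Int.even_or_odd c with hcpar | hcpar
      · obtain ⟨d, hd⟩ := hcpar
        exact ⟨m, Or.inr ⟨d, by rw [hc, hd]; ring⟩⟩
      · obtain ⟨u, hu, hA⟩ := aux_three_pow n
        have hpar : Even (c + 3 ^ m * u) := hcpar.add_odd ((Int.odd_pow.mpr (Or.inl ⟨1, by norm_num⟩)).mul hu)
        obtain ⟨e, he⟩ := hpar
        refine ⟨m + 2 ^ (n + 1), Or.inr ⟨e, ?_⟩⟩
        rw [pow_add (3 : ℤ) m, hA]
        linear_combination hc + (2 : ℤ) ^ (n + 3) * he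

/-- Iterating the cube condition: powers `3 ^ m`. -/
private lemma aux_three_pow_conj {G : Type*} [Group G]
    (H : ∀ x : G, IsConj (x ^ (3 : ℕ)) x ∨ IsConj (x ^ (3 : ℕ)) x⁻¹) (m : ℕ) (x : G) :
    IsConj (x ^ (3 ^ m : ℕ)) x ∨ IsConj (x ^ (3 ^ m : ℕ)) x⁻¹ := by
  induction m with
  | zero => left; simpa using IsConj.refl x
  | succ n ih =>
    have hx : x ^ (3 ^ (n + 1) : ℕ) = (x ^ (3 ^ n : ℕ)) ^ (3 : ℕ) := by
      rw [← pow_mul, pow_succ]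
    rcases ih with h | h
    · have h3 := aux_isConj_pow h 3
      rcases H x with h' | h'
      · exact Or.inl (by rw [hx]; exact h3.trans h')
      · exact Or.inr (by rw [hx]; exact h3.trans h')
    · have h3 : IsConj (x ^ (3 ^ (n + 1) : ℕ)) ((x ^ (3 : ℕ))⁻¹) := by
        rw [hx, ← inv_pow]
        exact aux_isConj_pow h 3
      rcases H x with h' | h'
      · exact Or.inr (h3.trans (aux_isConj_inv h'))
      · have h'' := aux_isConj_inv h'
        rw [inv_inv] at h''
        exact Or.inl (h3.trans h'')

theorem stmt_7 {G : Type*} [Group G] [Finite G] (h2 : IsPGroup 2 G) :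
    IsCutGroup G ↔ ∀ x : G, IsConj (x ^ (3 : ℕ)) x ∨ IsConj (x ^ (3 : ℕ)) x⁻¹ := by
  have hfact : Fact (Nat.Prime 2) := ⟨Nat.prime_two⟩
  constructor
  · intro hcut x
    obtain ⟨k, hk⟩ := IsPGroup.iff_orderOf.mp h2 x
    have hgcd : Int.gcd 3 (orderOf x) = 1 := by
      rw [hk]
      have : Nat.Coprime 3 (2 ^ k) := Nat.Coprime.pow_right k (by decide)
      simpa [Int.gcd, Nat.Coprime, Int.natAbs_pow] using this
    have := hcut x 3 hgcd
    rwa [show ((3 : ℤ)) = ((3 : ℕ) : ℤ) by norm_num, zpow_natCast] at this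
  · intro H x j hj
    obtain ⟨k, hk⟩ := IsPGroup.iff_orderOf.mp h2 x
    rcases Nat.eq_zero_or_pos k with hk0 | hkpos
    · -- orderOf x = 1, so x = 1
      have hx1 : x = 1 := orderOf_eq_one_iff.mp (by rw [hk, hk0, pow_zero])
      subst hx1
      left
      simp
    · -- j is odd
      have hodd : Odd j := by
        rw [Int.not_even_iff_odd.symm.eq]
        intro hev
        obtain ⟨t, ht⟩ := hev
        obtain ⟨a, b, hab⟩ := Int.isCoprime_iff_gcd_eq_one.mpr hj
        have h2dvd : (2 : ℤ) ∣ 1 := by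
          rw [← hab, hk]
          refine dvd_add ⟨a * t, by rw [ht]; ring⟩ ?_
          refine Dvd.dvd.mul_left ?_ b
          push_cast
          exact dvd_pow_self 2 hkpos.ne'
        norm_num at h2dvd
      obtain ⟨m, hm | hm⟩ := aux_pm_three_pow k j hodd
      · -- x ^ j = x ^ (3 ^ m)
        have hdvd : (orderOf x : ℤ) ∣ j - (3 : ℤ) ^ m := by
          rw [hk]
          exact dvd_trans (by push_cast; exact pow_dvd_pow 2 (Nat.le_add_right k 3)) hm
        have hxj : x ^ j = x ^ ((3 ^ m : ℕ) : ℤ) := by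
          rw [zpow_eq_zpow_iff_modEq]
          have hc : ((3 ^ m : ℕ) : ℤ) = (3 : ℤ) ^ m := by push_cast; ring
          rw [hc]
          exact (Int.modEq_iff_dvd.mpr hdvd).symm
        rw [hxj, zpow_natCast]
        exact aux_three_pow_conj H m x
      · -- x ^ j = (x ^ (3 ^ m))⁻¹
        have hdvd : (orderOf x : ℤ) ∣ j - (-(3 : ℤ) ^ m) := by
          rw [hk]
          refine dvd_trans (by push_cast; exact pow_dvd_pow 2 (Nat.le_add_right k 3)) ?_
          simpa [sub_neg_eq_add] using hm
        have hxj : x ^ j = x ^ (-((3 ^ m : ℕ) : ℤ)) := by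
          rw [zpow_eq_zpow_iff_modEq]
          have hc : (-((3 ^ m : ℕ) : ℤ)) = -(3 : ℤ) ^ m := by push_cast; ring
          rw [hc]
          exact (Int.modEq_iff_dvd.mpr hdvd).symm
        rw [hxj, zpow_neg, zpow_natCast]
        rcases aux_three_pow_conj H m x with h | h
        · exact Or.inr (aux_isConj_inv h)
        · have h' := aux_isConj_inv h
          rw [inv_inv] at h'
          exact Or.inl h'
end

section
/- If G is a finite nilpotent cut group, then every prime dividing |G| is 2 or 3. -/
/-!
A central element `x` of odd order in a cut group has `x ^ 2` conjugate, hence equal, to `x` or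
`x⁻¹`, so `x ^ 3 = 1`. A prime `p ≥ 5` dividing `|G|` divides either `|Z(G)|`, where Cauchy's
theorem yields a central element of order `p`, or `|G / Z(G)|`; since `G / Z(G)` is again a
nilpotent cut group of smaller nilpotency class, induction excludes both.
-/

lemma Int.exists_coprime_modEq_of_dvd {m n : ℕ} [NeZero n] (hmn : m ∣ n) {j : ℤ}
    (hj : IsCoprime j m) : ∃ k : ℕ, k.Coprime n ∧ (k : ℤ) ≡ j [ZMOD m] := by
  have hunit : IsUnit (j : ZMod m) := (ZMod.coe_int_isUnit_iff_isCoprime j m).mpr hj.symm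
  obtain ⟨u, hu⟩ := ZMod.unitsMap_surjective hmn hunit.unit
  refine ⟨(u : ZMod n).val, ZMod.val_coe_unit_coprime u, ?_⟩
  rw [← ZMod.intCast_eq_intCast_iff, Int.cast_natCast, ZMod.natCast_val,
    ← ZMod.unitsMap_val hmn, hu, IsUnit.unit_spec]

lemma IsConj.eq_of_mem_center {G : Type*} [Group G] {a b : G} (h : IsConj a b)
    (ha : a ∈ Subgroup.center G) : a = b := by
  obtain ⟨c, hc⟩ := isConj_iff.mp h
  rwa [(Subgroup.mem_center_iff.mp ha c), mul_inv_cancel_right] at hc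

namespace IsCutGroup

variable {G H : Type*} [Group G] [Group H]

lemma of_surjective [Finite G] (hG : IsCutGroup G) (f : G →* H)
    (hf : Function.Surjective f) : IsCutGroup H := by
  intro y j hj
  obtain ⟨x, rfl⟩ := hf y
  have : NeZero (orderOf x) := ⟨(orderOf_pos x).ne'⟩
  obtain ⟨k, hk, hkj⟩ := Int.exists_coprime_modEq_of_dvd (orderOf_map_dvd f x)
    (Int.isCoprime_iff_gcd_eq_one.mpr hj)
  have hpow : f x ^ j = f (x ^ (k : ℤ)) := by
    rw [map_zpow, zpow_eq_zpow_iff_modEq]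
    exact hkj.symm
  rw [hpow, ← map_inv]
  exact (hG x k (by simpa using hk)).imp f.map_isConj f.map_isConj

lemma quotient [Finite G] (hG : IsCutGroup G) (N : Subgroup G) [N.Normal] :
    IsCutGroup (G ⧸ N) :=
  hG.of_surjective (QuotientGroup.mk' N) (QuotientGroup.mk'_surjective N)

lemma pow_three_eq_one_of_mem_center (hG : IsCutGroup G) {x : G}
    (hx : x ∈ Subgroup.center G) (hodd : Odd (orderOf x)) : x ^ 3 = 1 := by
  have hsq : x ^ (2 : ℤ) ∈ Subgroup.center G := Subgroup.zpow_mem _ hx 2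
  have hcop : Int.gcd 2 (orderOf x) = 1 := by
    rw [show (2 : ℤ) = ((2 : ℕ) : ℤ) from rfl, Int.gcd_natCast_natCast]
    exact Nat.coprime_two_left.mpr hodd
  rcases hG x 2 hcop with h | h
  · have hx1 : x = 1 := by
      simpa [pow_two] using h.eq_of_mem_center hsq
    simp [hx1]
  · have hinv : x ^ 2 = x⁻¹ := by
      simpa using h.eq_of_mem_center hsq
    rw [pow_succ, hinv, inv_mul_cancel]

lemma prime_eq_two_or_three_of_dvd_card_center [Finite G] (hG : IsCutGroup G) {p : ℕ}
    (hp : p.Prime) (hpZ : p ∣ Nat.card (Subgroup.center G)) : p = 2 ∨ p = 3 := by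
  have : Fact p.Prime := ⟨hp⟩
  obtain ⟨z, hz⟩ := exists_prime_orderOf_dvd_card' p hpZ
  rw [← Subgroup.orderOf_coe] at hz
  refine hp.eq_two_or_odd'.imp_right fun hodd => ?_
  have hz3 := hG.pow_three_eq_one_of_mem_center z.2 (hz ▸ hodd)
  exact (Nat.prime_dvd_prime_iff_eq hp Nat.prime_three).mp (hz ▸ orderOf_dvd_of_pow_eq_one hz3)

end IsCutGroup

theorem stmt_9 {G : Type*} [Group G] [Finite G] [Group.IsNilpotent G]
    (hG : IsCutGroup G) :
    ∀ p : ℕ, p.Prime → p ∣ Nat.card G → p = 2 ∨ p = 3 := by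
  revert hG
  refine Group.nilpotent_center_quotient_ind (P := fun G _ _ => ∀ [Finite G], IsCutGroup G →
    ∀ p : ℕ, p.Prime → p ∣ Nat.card G → p = 2 ∨ p = 3) G ?base ?step
  case base =>
    intro G _ _ _ _ p hp hp1
    rw [Nat.card_of_subsingleton (1 : G)] at hp1
    exact absurd (Nat.eq_one_of_dvd_one hp1) hp.ne_one
  case step =>
    intro G _ _ ih _ hG p hp hpG
    rw [Subgroup.card_eq_card_quotient_mul_card_subgroup (Subgroup.center G)] at hpG
    rcases hp.dvd_mul.mp hpG with hpQ | hpZ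
    · exact ih (hG.quotient _) p hp hpQ
    · exact hG.prime_eq_two_or_three_of_dvd_card_center hp hpZ
end

section
/- If G is a nontrivial finite cut group, then 2 divides |G| or 3 divides |G|. -/
private lemma cut_pow_mod {G : Type*} [Group G] {x : G} {p : ℕ}
    (hx : orderOf x = p) (n : ℕ) : x ^ (n % p) = x ^ n := by
  subst hx; exact pow_mod_orderOf x n

private lemma cut_pow_val_mul {G : Type*} [Group G] {x : G} {p : ℕ} [Fact p.Prime]
    (hx : orderOf x = p) (a b : ZMod p) :
    x ^ (a * b).val = (x ^ a.val) ^ b.val := by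
  rw [ZMod.val_mul, cut_pow_mod hx, pow_mul]

private lemma cut_val_eq_one {p : ℕ} [Fact p.Prime] {a : ZMod p} (h : a.val = 1) : a = 1 := by
  have := (ZMod.natCast_rightInverse (n := p)) a
  rw [← this, h]
  simp

/-- Key auxiliary step: if `x` has order `p` and some conjugate of `x ^ (w.val)` equals `x`,
then the order of the unit `w` divides `Nat.card G`. -/
private lemma cut_aux {G : Type*} [Group G] [Finite G] {p : ℕ} [Fact p.Prime] {x : G}
    (hx : orderOf x = p) (w : (ZMod p)ˣ) (c : G)
    (hc : c * x ^ ((w : ZMod p)).val * c⁻¹ = x) :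
    orderOf w ∣ Nat.card G := by
  set v : (ZMod p)ˣ := w⁻¹ with hv
  have hone : x ^ ((1 : ZMod p)).val = x := by
    rw [ZMod.val_one]; exact pow_one x
  have hcx : c * x * c⁻¹ = x ^ ((v : ZMod p)).val := by
    have h1 : x = (x ^ ((w : ZMod p)).val) ^ ((v : ZMod p)).val := by
      rw [← cut_pow_val_mul hx]
      have hwv : ((w : ZMod p) * (v : ZMod p)) = 1 := by
        rw [hv, ← Units.val_mul]
        simp
      rw [hwv, hone]
    calc c * x * c⁻¹ = c * (x ^ ((w : ZMod p)).val) ^ ((v : ZMod p)).val * c⁻¹ := by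
            rw [← h1]
      _ = (c * x ^ ((w : ZMod p)).val * c⁻¹) ^ ((v : ZMod p)).val := by rw [conj_pow]
      _ = x ^ ((v : ZMod p)).val := by rw [hc]
  have key : ∀ n : ℕ, c ^ n * x * (c ^ n)⁻¹ = x ^ (((v ^ n : (ZMod p)ˣ) : ZMod p)).val := by
    intro n
    induction n with
    | zero => simpa using hone.symm
    | succ n ih =>
      have hstep : c ^ (n + 1) * x * (c ^ (n + 1))⁻¹
          = c * (c ^ n * x * (c ^ n)⁻¹) * c⁻¹ := by
        rw [pow_succ']
        group
      rw [hstep, ih, ← conj_pow, hcx, ← cut_pow_val_mul hx]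
      congr 1
      rw [← Units.val_mul, ← pow_succ']
  have hvt : v ^ orderOf c = 1 := by
    have h := key (orderOf c)
    rw [pow_orderOf_eq_one c] at h
    simp only [one_mul, inv_one, mul_one] at h
    have hpp : x ^ (((v ^ orderOf c : (ZMod p)ˣ) : ZMod p)).val = x ^ (1 : ℕ) := by
      rw [pow_one, ← h]
    rw [pow_eq_pow_iff_modEq, hx] at hpp
    have hlt : (((v ^ orderOf c : (ZMod p)ˣ) : ZMod p)).val < p := ZMod.val_lt _
    have h1p : 1 < p := (Fact.out : p.Prime).one_lt
    have hval1 : (((v ^ orderOf c : (ZMod p)ˣ) : ZMod p)).val = 1 := by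
      have h' := hpp
      rwa [Nat.ModEq, Nat.mod_eq_of_lt hlt, Nat.mod_eq_of_lt h1p] at h'
    have hval : ((v ^ orderOf c : (ZMod p)ˣ) : ZMod p) = 1 := cut_val_eq_one hval1
    ext
    simpa using hval
  have h1 : orderOf v ∣ orderOf c := orderOf_dvd_of_pow_eq_one hvt
  have h2 : orderOf c ∣ Nat.card G := orderOf_dvd_natCard c
  have hov : orderOf w = orderOf v := (orderOf_inv w).symm
  rw [hov]
  exact dvd_trans h1 h2

theorem stmt_10 {G : Type*} [Group G] [Finite G] [Nontrivial G] (hG : IsCutGroup G) :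
    2 ∣ Nat.card G ∨ 3 ∣ Nat.card G := by
  by_contra hcon
  push_neg at hcon
  obtain ⟨h2, h3⟩ := hcon
  have hN1 : Nat.card G ≠ 1 := by
    have := Finite.one_lt_card (α := G)
    omega
  obtain ⟨p, hpdef⟩ : ∃ p, p = (Nat.card G).minFac := ⟨_, rfl⟩
  have hp : p.Prime := hpdef ▸ Nat.minFac_prime hN1
  have hpdvd : p ∣ Nat.card G := hpdef ▸ Nat.minFac_dvd _
  haveI : Fact p.Prime := ⟨hp⟩
  have hp2 : p ≠ 2 := by rintro rfl; exact h2 hpdvd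
  have hp3 : p ≠ 3 := by rintro rfl; exact h3 hpdvd
  have hp4 : p ≠ 4 := by rintro rfl; norm_num at hp
  have hp5 : 5 ≤ p := by have := hp.two_le; omega
  haveI : Fintype G := Fintype.ofFinite G
  have hcard : Nat.card G = Fintype.card G := Nat.card_eq_fintype_card
  obtain ⟨x, hx⟩ := exists_prime_orderOf_dvd_card p (hcard ▸ hpdvd)
  obtain ⟨u, hu⟩ := IsCyclic.exists_generator (α := (ZMod p)ˣ)
  have huord : orderOf u = p - 1 := by
    rw [orderOf_eq_card_of_forall_mem_zpowers hu, Nat.card_eq_fintype_card, ZMod.card_units]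
  have hcop : Int.gcd (((u : ZMod p)).val : ℤ) (orderOf x) = 1 := by
    rw [hx, Int.gcd_natCast_natCast]
    exact ZMod.val_coe_unit_coprime u
  have hxup : x ^ ((((u : ZMod p)).val : ℤ)) = x ^ (((u : ZMod p)).val) := zpow_natCast x _
  have hmain : ∃ w : (ZMod p)ˣ, (w = u ∨ w = -u) ∧
      ∃ c : G, c * x ^ ((w : ZMod p)).val * c⁻¹ = x := by
    rcases hG x (((u : ZMod p)).val : ℤ) hcop with h | h
    · rw [hxup, isConj_iff] at h
      exact ⟨u, Or.inl rfl, h⟩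
    · rw [hxup, isConj_iff] at h
      obtain ⟨c, hc⟩ := h
      refine ⟨-u, Or.inr rfl, c, ?_⟩
      have hneg : x ^ (((-u : (ZMod p)ˣ) : ZMod p)).val = (x ^ ((u : ZMod p)).val)⁻¹ := by
        have hsum : x ^ ((u : ZMod p)).val * x ^ (((-u : (ZMod p)ˣ) : ZMod p)).val = 1 := by
          rw [← pow_add]
          have hmod : (((u : ZMod p)).val + (((-u : (ZMod p)ˣ) : ZMod p)).val) % p = 0 := by
            rw [← ZMod.val_add]
            push_cast
            simp
          rw [← cut_pow_mod hx, hmod, pow_zero]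
        exact (inv_eq_of_mul_eq_one_right hsum).symm
      rw [hneg]
      calc c * (x ^ ((u : ZMod p)).val)⁻¹ * c⁻¹
          = (c * x ^ ((u : ZMod p)).val * c⁻¹)⁻¹ := by group
        _ = x := by rw [hc]; group
  obtain ⟨w, hwu, c, hc⟩ := hmain
  have hdvd : orderOf w ∣ Nat.card G := cut_aux hx w c hc
  have hw1 : orderOf w ≠ 1 := by
    intro h
    have hwone : w = 1 := orderOf_eq_one_iff.mp h
    rcases hwu with rfl | rfl
    · rw [hwone, orderOf_one] at huord; omega
    · have huneg : u = -1 := by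
        have := congrArg Neg.neg hwone
        simpa using this
      have hu2 : u ^ 2 = 1 := by rw [huneg, neg_one_sq]
      have hdvd2 : orderOf u ∣ 2 := orderOf_dvd_of_pow_eq_one hu2
      have hle2 : orderOf u ≤ 2 := Nat.le_of_dvd (by norm_num) hdvd2
      omega
  have hwcard : orderOf w ∣ p - 1 := by
    have := orderOf_dvd_natCard w
    rwa [Nat.card_eq_fintype_card, ZMod.card_units] at this
  have hq : (orderOf w).minFac.Prime := Nat.minFac_prime hw1
  have hqm : (orderOf w).minFac ∣ orderOf w := Nat.minFac_dvd _
  have hqN : (orderOf w).minFac ∣ Nat.card G := hqm.trans hdvd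
  have hple : (Nat.card G).minFac ≤ (orderOf w).minFac := Nat.minFac_le_of_dvd hq.two_le hqN
  rw [← hpdef] at hple
  have hqle : (orderOf w).minFac ≤ p - 1 := Nat.le_of_dvd (by omega) (hqm.trans hwcard)
  omega
end

section
/- Let G be a finite group of odd order that is semi-rational. Then G is inverse semi-rational: for every x ∈ G, every generator of ⟨x⟩ is conjugate to x or to x⁻¹. -/
lemma aux_real_trivial {G : Type*} [Group G] [Finite G] (hodd : Odd (Nat.card G))
    {x : G} (h : IsConj x x⁻¹) : x = 1 := by
  obtain ⟨c, hc'⟩ := isConj_iff.mp h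
  have h2 : c ^ 2 * x * (c ^ 2)⁻¹ = x := by
    have : c * (c * x * c⁻¹) * c⁻¹ = c * x⁻¹ * c⁻¹ := by rw [hc']
    calc c ^ 2 * x * (c ^ 2)⁻¹ = c * (c * x * c⁻¹) * c⁻¹ := by rw [pow_two]; group
    _ = c * x⁻¹ * c⁻¹ := this
    _ = (c * x * c⁻¹)⁻¹ := by group
    _ = x := by rw [hc']; group
  have hcomm : Commute (c ^ 2) x := by
    have : c ^ 2 * x = x * c ^ 2 := by
      have := congrArg (fun t => t * c ^ 2) h2
      simpa [mul_assoc] using this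
    exact this
  have hn : Odd (orderOf c) := by
    rcases Nat.even_or_odd (orderOf c) with he | ho
    · exfalso
      have hd : orderOf c ∣ Nat.card G := orderOf_dvd_natCard c
      have : (2 : ℕ) ∣ Nat.card G := dvd_trans he.two_dvd hd
      exact (Nat.not_even_iff_odd.mpr hodd) (even_iff_two_dvd.mpr this)
    · exact ho
  have hck : c = (c ^ 2) ^ ((orderOf c + 1) / 2) := by
    rw [← pow_mul]
    have h21 : 2 * ((orderOf c + 1) / 2) = orderOf c + 1 := by
      obtain ⟨k, hk⟩ := hn; omega
    rw [h21, pow_succ, pow_orderOf_eq_one, one_mul]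
  have hcx : Commute c x := by
    rw [hck]; exact hcomm.pow_left _
  have hxx : x⁻¹ = x := by
    rw [← hc', hcx.eq]; group
  have hx2 : x * x = 1 := by nth_rewrite 1 [← hxx]; simp
  have hdvd : orderOf x ∣ 2 := orderOf_dvd_of_pow_eq_one (by rw [pow_two]; exact hx2)
  rcases (Nat.dvd_prime Nat.prime_two).mp hdvd with h1 | h2
  · exact orderOf_eq_one_iff.mp h1
  · exfalso
    have : (2 : ℕ) ∣ Nat.card G := h2 ▸ orderOf_dvd_natCard x
    exact (Nat.not_even_iff_odd.mpr hodd) (even_iff_two_dvd.mpr this)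

theorem stmt_19 {G : Type*} [Group G] [Finite G] (hodd : Odd (Nat.card G))
    (hsr : ∀ x : G, ∃ y z : G, ∀ j : ℤ, Int.gcd j (orderOf x) = 1 →
      IsConj (x ^ j) y ∨ IsConj (x ^ j) z) :
    ∀ x : G, ∀ j : ℤ, Int.gcd j (orderOf x) = 1 →
      IsConj (x ^ j) x ∨ IsConj (x ^ j) x⁻¹ := by
  intro x j hj
  obtain ⟨y, z, h⟩ := hsr x
  have h1 : IsConj x y ∨ IsConj x z := by
    have := h 1 (by simp)
    simpa using this
  have hm : IsConj x⁻¹ y ∨ IsConj x⁻¹ z := by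
    have := h (-1) (by simp [Int.gcd])
    simpa using this
  have hj' := h j hj
  have triv : IsConj x x⁻¹ → (IsConj (x ^ j) x ∨ IsConj (x ^ j) x⁻¹) := by
    intro hr
    have hx1 : x = 1 := aux_real_trivial hodd hr
    left; rw [hx1]; simp
  rcases h1 with hy | hz
  · rcases hm with hy' | hz'
    · exact triv (hy.trans hy'.symm)
    · rcases hj' with ha | hb
      · exact Or.inl (ha.trans hy.symm)
      · exact Or.inr (hb.trans hz'.symm)
  · rcases hm with hy' | hz'
    · rcases hj' with ha | hb
      · exact Or.inr (ha.trans hy'.symm)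
      · exact Or.inl (hb.trans hz.symm)
    · exact triv (hz.trans hz'.symm)
end
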